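/- Let (W₁,V₁),…,(W_n,V_n) be i.i.d. copies of a pair (W,V), where W is a random element of a separable Hilbert space G₁ with ‖W‖ ≤ M almost surely, and V = κ̃_Z(·,Z) is the centered kernel section of a random element Z, with covariance operator Σ_ZZ having eigenvalues γ₁ ≥ γ₂ ≥ … and E[W ⊗ V] = 0 (e.g. E[W | Z] = 0, as holds for W = κ̃_{Ẍ|Z}(·,Ẍ|Z)). Then for every ε > 0, E‖ E_n[W ⊗ V] (Σ_ZZ + εI)^{−1} ‖²_HS ≤ M² n^{−1} Σ_{k=1}^∞ γ_k/(γ_k + ε)², where E_n denotes the sample average over i = 1,…,n and ‖·‖_HS is the Hilbert–Schmidt norm. -/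

import Mathlib

/-!
Write `Ŝ = E_n[W ⊗ V]` and `R = (Σ_ZZ + εI)⁻¹`. Along the Hilbert basis `(b k)` the squared
Hilbert–Schmidt norm of `Ŝ R` is `∑ₖ ‖Ŝ (R (b k))‖²`. For a fixed direction `u`, `Ŝ u` is the
sample mean of the i.i.d. vectors `⟪Vᵢ, u⟫ • Wᵢ`, which are centred because `E[W ⊗ V] = 0` and
satisfy `‖⟪V, u⟫ • W‖² ≤ M² ⟪V, u⟫²`; hence `E‖Ŝ u‖² ≤ M² n⁻¹ E⟪V, u⟫² = M² n⁻¹ ⟪u, Σ_ZZ u⟫`.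
Summing over `u = R (b k)` leaves the trace of `R Σ_ZZ R`, which in the eigenbasis `(φ j)` is
`∑ⱼ γⱼ ‖R (φ j)‖² = ∑ⱼ γⱼ / (γⱼ + ε)²`.
-/

open MeasureTheory ProbabilityTheory Filter
open scoped RealInnerProductSpace ENNReal

noncomputable section

/-- The rank-one operator `u ⊗ v : H₂ → H₁`, `w ↦ ⟪v, w⟫ u`. -/
def rankOne {H1 H2 : Type*} [NormedAddCommGroup H1] [InnerProductSpace ℝ H1]
    [NormedAddCommGroup H2] [InnerProductSpace ℝ H2] (u : H1) (v : H2) : H2 →L[ℝ] H1 :=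
  (innerSL ℝ v).smulRight u

variable {Ω : Type*} [MeasurableSpace Ω]

/-- The mean element `μ = E[k(·,X)] ∈ G` (Bochner integral). -/
def meanElem {H G : Type*} [NormedAddCommGroup G] [InnerProductSpace ℝ G] [CompleteSpace G]
    (P : Measure Ω) (k : H → G) (X : Ω → H) : G :=
  ∫ ω, k (X ω) ∂P

/-- The centered kernel section `κ̃(·,x) = κ(·,x) − μ`. -/
def ctrKer {H G : Type*} [NormedAddCommGroup G] [InnerProductSpace ℝ G] [CompleteSpace G]
    (P : Measure Ω) (k : H → G) (X : Ω → H) (x : H) : G :=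
  k x - meanElem P k X

/-- The covariance operator `Σ_ZZ = E[κ̃_Z(·,Z) ⊗ κ̃_Z(·,Z)]`. -/
def covOp {H G : Type*} [NormedAddCommGroup G] [InnerProductSpace ℝ G] [CompleteSpace G]
    (P : Measure Ω) (k : H → G) (Z : Ω → H) : G →L[ℝ] G :=
  ∫ ω, rankOne (ctrKer P k Z (Z ω)) (ctrKer P k Z (Z ω)) ∂P

/-- Squared Hilbert–Schmidt norm of an operator, computed along a Hilbert
basis of the domain. -/
def hsNormSq {G1 G2 : Type*} [NormedAddCommGroup G1] [InnerProductSpace ℝ G1]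
    [NormedAddCommGroup G2] [InnerProductSpace ℝ G2] [CompleteSpace G2]
    (b : HilbertBasis ℕ ℝ G2) (T : G2 →L[ℝ] G1) : ℝ :=
  ∑' k, ‖T (b k)‖ ^ 2

open Finset

section RankOne

variable {H1 H2 : Type*} [NormedAddCommGroup H1] [InnerProductSpace ℝ H1]
  [NormedAddCommGroup H2] [InnerProductSpace ℝ H2]

@[simp]
lemma rankOne_apply (u : H1) (v w : H2) : rankOne u v w = ⟪v, w⟫ • u := rfl

/-- `rankOne` as a continuous bilinear map: `rankOneBilin v u = rankOne u v`. -/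
def rankOneBilin : H2 →L[ℝ] H1 →L[ℝ] H2 →L[ℝ] H1 :=
  (ContinuousLinearMap.smulRightL ℝ H2 H1).comp (innerSL ℝ)

variable {P : Measure Ω}

lemma integrable_rankOne_of_memLp {A : Ω → H1} {B : Ω → H2} (hA : MemLp A 2 P)
    (hB : MemLp B 2 P) : Integrable (fun ω => rankOne (A ω) (B ω)) P :=
  memLp_one_iff_integrable.1 (rankOneBilin.memLp_of_bilin 1 hB hA)

lemma integrable_rankOne_of_bdd {A : Ω → H1} {B : Ω → H2} (C : ℝ)
    (hA : AEStronglyMeasurable A P) (hAC : ∀ᵐ ω ∂P, ‖A ω‖ ≤ C) (hB : Integrable B P) :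
    Integrable (fun ω => rankOne (A ω) (B ω)) P :=
  rankOneBilin.integrable_of_bilin_of_bdd_right C hB hA hAC

end RankOne

section Independence

variable {E : Type*} [NormedAddCommGroup E] [InnerProductSpace ℝ E] [CompleteSpace E]
  [MeasurableSpace E] [BorelSpace E] {P : Measure Ω} [IsFiniteMeasure P] {ι : Type*}

lemma integral_norm_sq_sum_of_pairwise_indepFun {A : ι → Ω → E}
    (hind : Pairwise fun i j => IndepFun (A i) (A j) P) (hA : ∀ i, MemLp (A i) 2 P)
    (hmean : ∀ i, ∫ ω, A i ω ∂P = 0) (s : Finset ι) :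
    ∫ ω, ‖∑ i ∈ s, A i ω‖ ^ 2 ∂P = ∑ i ∈ s, ∫ ω, ‖A i ω‖ ^ 2 ∂P := by
  have hint : ∀ i j, Integrable (fun ω => ⟪A i ω, A j ω⟫) P := fun i j =>
    memLp_one_iff_integrable.1 ((innerSL ℝ).memLp_of_bilin 1 (hA i) (hA j))
  have hcross : ∀ i j, i ≠ j → ∫ ω, ⟪A i ω, A j ω⟫ ∂P = 0 := fun i j hij => by
    refine ((hind hij).integral_bilin ((hA i).integrable one_le_two)
      ((hA j).integrable one_le_two) (innerSL ℝ)).trans ?_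
    simp [hmean]
  calc ∫ ω, ‖∑ i ∈ s, A i ω‖ ^ 2 ∂P
      = ∫ ω, ∑ i ∈ s, ∑ j ∈ s, ⟪A i ω, A j ω⟫ ∂P := by
        simp_rw [← real_inner_self_eq_norm_sq, sum_inner, inner_sum]
    _ = ∑ i ∈ s, ∑ j ∈ s, ∫ ω, ⟪A i ω, A j ω⟫ ∂P := by
        rw [integral_finsetSum _ fun i _ => integrable_finsetSum _ fun j _ => hint i j]
        exact sum_congr rfl fun i _ => integral_finsetSum _ fun j _ => hint i j
    _ = ∑ i ∈ s, ∫ ω, ‖A i ω‖ ^ 2 ∂P := by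
        refine sum_congr rfl fun i hi => ?_
        rw [sum_eq_single_of_mem i hi fun j _ hji => hcross i j hji.symm]
        simp_rw [real_inner_self_eq_norm_sq]

lemma integral_norm_sq_sum_of_identDistrib {A : ι → Ω → E} {A₀ : Ω → E}
    (hind : Pairwise fun i j => IndepFun (A i) (A j) P) (hid : ∀ i, IdentDistrib (A i) A₀ P P)
    (hA₀ : MemLp A₀ 2 P) (hmean : ∫ ω, A₀ ω ∂P = 0) (s : Finset ι) :
    ∫ ω, ‖∑ i ∈ s, A i ω‖ ^ 2 ∂P = #s * ∫ ω, ‖A₀ ω‖ ^ 2 ∂P := by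
  rw [integral_norm_sq_sum_of_pairwise_indepFun hind (fun i => (hid i).memLp_iff.2 hA₀)
    (fun i => (hid i).integral_eq.trans hmean), ← nsmul_eq_mul, ← sum_const]
  exact sum_congr rfl fun i _ => ((hid i).comp (measurable_norm.pow_const 2)).integral_eq

end Independence

lemma ENNReal.ofReal_tsum_le {ι : Type*} {f : ι → ℝ} (hf : ∀ i, 0 ≤ f i) :
    ENNReal.ofReal (∑' i, f i) ≤ ∑' i, ENNReal.ofReal (f i) := by
  by_cases h : Summable f
  · exact (ENNReal.ofReal_tsum_of_nonneg hf h).le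
  · simp [tsum_eq_zero_of_not_summable h]

section Spectral

variable {E : Type*} [NormedAddCommGroup E] [InnerProductSpace ℝ E]

lemma HilbertBasis.hasSum_inner_sq {κ : Type*} (b : HilbertBasis κ ℝ E) (x : E) :
    HasSum (fun k => ⟪x, b k⟫ ^ 2) (‖x‖ ^ 2) := by
  simpa [sq, real_inner_comm x, real_inner_self_eq_norm_sq] using b.hasSum_inner_mul_inner x x

lemma ContinuousLinearMap.ringInverse_apply_of_apply_eq_smul {T : E →L[ℝ] E} (hT : IsUnit T)
    {x : E} {c : ℝ} (hc : c ≠ 0) (hx : T x = c • x) : Ring.inverse T x = c⁻¹ • x := by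
  have hinv : Ring.inverse T (T x) = x := by
    simpa using DFunLike.congr_fun (Ring.inverse_mul_cancel T hT) x
  rw [hx, map_smul] at hinv
  exact (eq_inv_smul_iff₀ hc).2 hinv

variable {ι : Type*} {C : E →L[ℝ] E} {γ : ι → ℝ} {φ : ι → E}

lemma apply_eq_smul_of_eq_tsum (hφ : Orthonormal ℝ φ)
    (hC : ∀ f, C f = ∑' j, (γ j * ⟪φ j, f⟫) • φ j) (j : ι) : C (φ j) = γ j • φ j := by
  classical
  rw [hC, tsum_eq_single j fun k hk => by simp [orthonormal_iff_ite.1 hφ k j, hk]]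
  simp [hφ.1 j]

variable [CompleteSpace E]

lemma hasSum_of_eq_tsum (hφ : Orthonormal ℝ φ)
    (hC : ∀ f, C f = ∑' j, (γ j * ⟪φ j, f⟫) • φ j) (f : E) :
    HasSum (fun j => (γ j * ⟪φ j, f⟫) • φ j) (C f) := by
  have hγ : ∀ j, ‖γ j‖ ≤ ‖C‖ := fun j => by
    simpa [norm_smul, hφ.1 j, apply_eq_smul_of_eq_tsum hφ hC j] using C.le_opNorm (φ j)
  have hsq : Summable fun j => ‖γ j * ⟪φ j, f⟫‖ ^ 2 :=
    ((hφ.inner_products_summable f).mul_left (‖C‖ ^ 2)).of_nonneg_of_le (fun j => by positivity)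
      fun j => by rw [norm_mul, mul_pow]; gcongr; exact hγ j
  rw [hC f]
  exact (by simpa using (hφ.orthogonalFamily.summable_iff_norm_sq_summable _).2 hsq :
    Summable fun j => (γ j * ⟪φ j, f⟫) • φ j).hasSum

lemma hasSum_inner_of_eq_tsum (hφ : Orthonormal ℝ φ)
    (hC : ∀ f, C f = ∑' j, (γ j * ⟪φ j, f⟫) • φ j) (f : E) :
    HasSum (fun j => γ j * ⟪φ j, f⟫ ^ 2) ⟪f, C f⟫ := by
  simpa [real_inner_smul_right, real_inner_comm f, sq, mul_assoc]
    using (hasSum_of_eq_tsum hφ hC f).mapL (innerSL ℝ f)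

end Spectral

section Trace

variable {E : Type*} [NormedAddCommGroup E] [InnerProductSpace ℝ E] [CompleteSpace E]
  {ι κ : Type*} {C : E →L[ℝ] E} {γ : ι → ℝ} {φ : ι → E}

lemma tsum_ofReal_inner_apply_comp_of_eq_tsum (b : HilbertBasis κ ℝ E) (hφ : Orthonormal ℝ φ)
    (hC : ∀ f, C f = ∑' j, (γ j * ⟪φ j, f⟫) • φ j) (hγ : ∀ j, 0 ≤ γ j) {S : E →L[ℝ] E}
    (hS : IsSelfAdjoint S) :
    ∑' k, ENNReal.ofReal ⟪S (b k), C (S (b k))⟫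
      = ∑' j, ENNReal.ofReal (γ j * ‖S (φ j)‖ ^ 2) := by
  have hnonneg : ∀ j x, 0 ≤ γ j * x ^ 2 := fun j x => mul_nonneg (hγ j) (sq_nonneg x)
  calc ∑' k, ENNReal.ofReal ⟪S (b k), C (S (b k))⟫
      = ∑' k, ∑' j, ENNReal.ofReal (γ j * ⟪φ j, S (b k)⟫ ^ 2) := by
        refine tsum_congr fun k => ?_
        have h := hasSum_inner_of_eq_tsum hφ hC (S (b k))
        rw [← h.tsum_eq, ENNReal.ofReal_tsum_of_nonneg (fun j => hnonneg j _) h.summable]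
    _ = ∑' j, ∑' k, ENNReal.ofReal (γ j * ⟪S (φ j), b k⟫ ^ 2) := by
        rw [ENNReal.tsum_comm]
        simp_rw [← hS.isSymmetric.apply_clm]
    _ = ∑' j, ENNReal.ofReal (γ j * ‖S (φ j)‖ ^ 2) := by
        refine tsum_congr fun j => ?_
        have h := (b.hasSum_inner_sq (S (φ j))).mul_left (γ j)
        rw [← h.tsum_eq, ENNReal.ofReal_tsum_of_nonneg (fun k => hnonneg j _) h.summable]

lemma tsum_ofReal_inner_resolvent_of_eq_tsum (b : HilbertBasis κ ℝ E) (hφ : Orthonormal ℝ φ)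
    (hC : ∀ f, C f = ∑' j, (γ j * ⟪φ j, f⟫) • φ j) (hCsa : IsSelfAdjoint C)
    (hγ : ∀ j, 0 ≤ γ j) (hγs : Summable γ) {ε : ℝ} (hε : 0 < ε) (hT : IsUnit (C + ε • 1)) :
    ∑' k, ENNReal.ofReal ⟪Ring.inverse (C + ε • 1) (b k), C (Ring.inverse (C + ε • 1) (b k))⟫
      = ENNReal.ofReal (∑' j, γ j / (γ j + ε) ^ 2) := by
  have hpos : ∀ j, 0 < γ j + ε := fun j => by linarith [hγ j]
  have hS : IsSelfAdjoint (Ring.inverse (C + ε • 1)) :=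
    (hCsa.add ((IsSelfAdjoint.all ε).smul (IsSelfAdjoint.one _))).ringInverse
  have hSφ : ∀ j, Ring.inverse (C + ε • 1) (φ j) = (γ j + ε)⁻¹ • φ j := fun j =>
    ContinuousLinearMap.ringInverse_apply_of_apply_eq_smul hT (hpos j).ne' (by
      simp [apply_eq_smul_of_eq_tsum hφ hC j, add_smul])
  have hsumm : Summable fun j => γ j / (γ j + ε) ^ 2 :=
    (hγs.div_const (ε ^ 2)).of_nonneg_of_le (fun j => div_nonneg (hγ j) (sq_nonneg _))
      fun j => div_le_div_of_nonneg_left (hγ j) (by positivity) (by nlinarith [hγ j])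
  rw [tsum_ofReal_inner_apply_comp_of_eq_tsum b hφ hC hγ hS,
    ENNReal.ofReal_tsum_of_nonneg (fun j => div_nonneg (hγ j) (sq_nonneg _)) hsumm]
  refine tsum_congr fun j => ?_
  rw [hSφ, norm_smul, hφ.1 j, Real.norm_of_nonneg (inv_nonneg.2 (hpos j).le), mul_one,
    inv_pow, div_eq_mul_inv]

end Trace

section Covariance

variable {E : Type*} [NormedAddCommGroup E] [InnerProductSpace ℝ E] {P : Measure Ω}

lemma Orthonormal.summable_integral_inner_sq {ι : Type*} {φ : ι → E} (hφ : Orthonormal ℝ φ)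
    {V : Ω → E} (hV : MemLp V 2 P) : Summable fun j => ∫ ω, ⟪V ω, φ j⟫ ^ 2 ∂P := by
  have hint : ∀ j, Integrable (fun ω => ⟪V ω, φ j⟫ ^ 2) P := fun j =>
    (hV.inner_const (φ j)).integrable_sq
  refine summable_of_sum_le (c := ∫ ω, ‖V ω‖ ^ 2 ∂P)
    (fun j => integral_nonneg fun _ => sq_nonneg _) fun s => ?_
  rw [← integral_finsetSum s fun j _ => hint j]
  refine integral_mono (integrable_finsetSum s fun j _ => hint j)
    (hV.integrable_norm_pow two_ne_zero) fun ω => ?_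
  simpa [real_inner_comm] using hφ.sum_inner_products_le (s := s) (V ω)

variable [CompleteSpace E] {H : Type*} {k : H → E} {Z : Ω → H}

lemma memLp_ctrKer [MeasurableSpace H] [MeasurableSpace E] [BorelSpace E]
    [SecondCountableTopology E] [IsFiniteMeasure P] (hk : Measurable k) (hZ : Measurable Z)
    (hk2 : Integrable (fun ω => ⟪k (Z ω), k (Z ω)⟫) P) :
    MemLp (fun ω => ctrKer P k Z (Z ω)) 2 P :=
  ((memLp_two_iff_integrable_sq_norm (hk.comp hZ).aestronglyMeasurable).2
    (by simpa [real_inner_self_eq_norm_sq] using hk2)).sub (memLp_const _)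

lemma inner_covOp_apply (hV : MemLp (fun ω => ctrKer P k Z (Z ω)) 2 P) (u v : E) :
    ⟪u, covOp P k Z v⟫ = ∫ ω, ⟪ctrKer P k Z (Z ω), u⟫ * ⟪ctrKer P k Z (Z ω), v⟫ ∂P := by
  have hint := integrable_rankOne_of_memLp hV hV
  rw [covOp, ContinuousLinearMap.integral_apply hint,
    ← integral_inner (hint.apply_continuousLinearMap v)]
  simp [real_inner_smul_right, real_inner_comm u, mul_comm]

lemma isSelfAdjoint_covOp (hV : MemLp (fun ω => ctrKer P k Z (Z ω)) 2 P) :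
    IsSelfAdjoint (covOp P k Z) :=
  ContinuousLinearMap.isSelfAdjoint_iff_isSymmetric.2 fun u v => by
    rw [ContinuousLinearMap.coe_coe, real_inner_comm, inner_covOp_apply hV, inner_covOp_apply hV]
    simp_rw [mul_comm]

lemma inner_covOp_apply_self (hV : MemLp (fun ω => ctrKer P k Z (Z ω)) 2 P) (u : E) :
    ⟪u, covOp P k Z u⟫ = ∫ ω, ⟪ctrKer P k Z (Z ω), u⟫ ^ 2 ∂P := by
  simpa [sq] using inner_covOp_apply hV u u

variable (hV : MemLp (fun ω => ctrKer P k Z (Z ω)) 2 P) {ι : Type*} {γ : ι → ℝ} {φ : ι → E}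
  (hφ : Orthonormal ℝ φ) (hspec : ∀ f, covOp P k Z f = ∑' j, (γ j * ⟪φ j, f⟫) • φ j)
include hV hφ hspec

lemma eq_integral_inner_sq_of_covOp_eq_tsum (j : ι) :
    γ j = ∫ ω, ⟪ctrKer P k Z (Z ω), φ j⟫ ^ 2 ∂P := by
  rw [← inner_covOp_apply_self hV, apply_eq_smul_of_eq_tsum hφ hspec j, real_inner_smul_right,
    real_inner_self_eq_norm_sq, hφ.1 j, one_pow, mul_one]

lemma nonneg_of_covOp_eq_tsum (j : ι) : 0 ≤ γ j :=
  (eq_integral_inner_sq_of_covOp_eq_tsum hV hφ hspec j).symm ▸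
    integral_nonneg fun _ => sq_nonneg _

lemma summable_of_covOp_eq_tsum : Summable γ :=
  (hφ.summable_integral_inner_sq hV).congr fun j =>
    (eq_integral_inner_sq_of_covOp_eq_tsum hV hφ hspec j).symm

end Covariance

section Empirical

variable {G1 GZ : Type*} [NormedAddCommGroup G1] [InnerProductSpace ℝ G1]
  [NormedAddCommGroup GZ] [InnerProductSpace ℝ GZ]

/-- The empirical cross-covariance operator `E_n[W ⊗ V]` of the first `n` samples. -/
def empiricalCrossCov {α : Type*} (Ws : ℕ → α → G1) (Vs : ℕ → α → GZ) (n : ℕ) (ω : α) :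
    GZ →L[ℝ] G1 :=
  (n : ℝ)⁻¹ • ∑ i ∈ range n, rankOne (Ws i ω) (Vs i ω)

lemma empiricalCrossCov_apply {α : Type*} (Ws : ℕ → α → G1) (Vs : ℕ → α → GZ) (n : ℕ) (ω : α)
    (u : GZ) :
    empiricalCrossCov Ws Vs n ω u = (n : ℝ)⁻¹ • ∑ i ∈ range n, rankOne (Ws i ω) (Vs i ω) u := by
  simp only [empiricalCrossCov, smul_apply, _root_.sum_apply]

variable [MeasurableSpace G1] [BorelSpace G1] [SecondCountableTopology G1]
  [MeasurableSpace GZ] [BorelSpace GZ] [SecondCountableTopology GZ]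

lemma measurable_rankOne_apply (u : GZ) : Measurable fun p : G1 × GZ => rankOne p.1 p.2 u :=
  (measurable_snd.inner measurable_const).smul measurable_fst

variable {P : Measure Ω} {W : Ω → G1} {V : Ω → GZ} {Ws : ℕ → Ω → G1} {Vs : ℕ → Ω → GZ}

lemma aemeasurable_empiricalCrossCov_apply
    (hident : ∀ i, IdentDistrib (fun ω => (Ws i ω, Vs i ω)) (fun ω => (W ω, V ω)) P P)
    (n : ℕ) (u : GZ) : AEMeasurable (fun ω => empiricalCrossCov Ws Vs n ω u) P := by
  simp only [empiricalCrossCov_apply]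
  exact (Finset.aemeasurable_fun_sum _ fun i _ =>
    (measurable_rankOne_apply u).comp_aemeasurable (hident i).aemeasurable_fst).const_smul _

lemma lintegral_norm_sq_empiricalCrossCov_apply_le [CompleteSpace G1] [IsFiniteMeasure P]
    (hiid : iIndepFun (fun i ω => (Ws i ω, Vs i ω)) P)
    (hident : ∀ i, IdentDistrib (fun ω => (Ws i ω, Vs i ω)) (fun ω => (W ω, V ω)) P P)
    (hV : MemLp V 2 P) {M : ℝ} (hW : ∀ᵐ ω ∂P, ‖W ω‖ ≤ M)
    (hzero : ∫ ω, rankOne (W ω) (V ω) ∂P = 0) (n : ℕ) (u : GZ) :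
    ∫⁻ ω, ENNReal.ofReal (‖empiricalCrossCov Ws Vs n ω u‖ ^ 2) ∂P
      ≤ ENNReal.ofReal (M ^ 2 * (n : ℝ)⁻¹ * ∫ ω, ⟪V ω, u⟫ ^ 2 ∂P) := by
  set A : ℕ → Ω → G1 := fun i ω => rankOne (Ws i ω) (Vs i ω) u
  set A₀ : Ω → G1 := fun ω => rankOne (W ω) (V ω) u
  have hid : ∀ i, IdentDistrib (A i) A₀ P P := fun i => (hident i).comp (measurable_rankOne_apply u)
  have hind : Pairwise fun i j => IndepFun (A i) (A j) P := fun i j hij =>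
    (hiid.indepFun hij).comp (measurable_rankOne_apply u) (measurable_rankOne_apply u)
  have hA₀le : ∀ᵐ ω ∂P, ‖A₀ ω‖ ^ 2 ≤ M ^ 2 * ⟪V ω, u⟫ ^ 2 := by
    filter_upwards [hW] with ω hω
    rw [show A₀ ω = ⟪V ω, u⟫ • W ω from rfl, norm_smul, mul_pow, Real.norm_eq_abs, sq_abs,
      mul_comm]
    gcongr
  have hA₀meas : AEStronglyMeasurable A₀ P := (hid 0).aemeasurable_snd.aestronglyMeasurable
  have hA₀ : MemLp A₀ 2 P := (memLp_two_iff_integrable_sq_norm hA₀meas).2 <|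
    ((hV.inner_const u).integrable_sq.const_mul _).mono' (hA₀meas.norm.pow 2)
      (by filter_upwards [hA₀le] with ω h; simpa using h)
  have hmean : ∫ ω, A₀ ω ∂P = 0 := by
    have hWmeas := (hident 0).aemeasurable_snd.fst.aestronglyMeasurable
    simpa [A₀, hzero] using (ContinuousLinearMap.integral_apply
      (integrable_rankOne_of_bdd M hWmeas hW (hV.integrable one_le_two)) u).symm
  have hsum := integral_norm_sq_sum_of_identDistrib hind hid hA₀ hmean (range n)
  have hnorm : ∀ ω, ‖empiricalCrossCov Ws Vs n ω u‖ ^ 2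
      = (n : ℝ)⁻¹ ^ 2 * ‖∑ i ∈ range n, A i ω‖ ^ 2 := fun ω => by
    rw [empiricalCrossCov_apply, norm_smul, mul_pow, Real.norm_eq_abs, sq_abs]
  have hint : Integrable (fun ω => ‖∑ i ∈ range n, A i ω‖ ^ 2) P :=
    (memLp_finsetSum _ fun i _ => (hid i).memLp_iff.2 hA₀).integrable_norm_pow two_ne_zero
  simp_rw [hnorm]
  rw [← ofReal_integral_eq_lintegral_ofReal (hint.const_mul _)
    (Eventually.of_forall fun ω => by positivity)]
  refine ENNReal.ofReal_le_ofReal ?_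
  calc ∫ ω, (n : ℝ)⁻¹ ^ 2 * ‖∑ i ∈ range n, A i ω‖ ^ 2 ∂P
      = (n : ℝ)⁻¹ ^ 2 * n * ∫ ω, ‖A₀ ω‖ ^ 2 ∂P := by
        rw [integral_const_mul, hsum, card_range, mul_assoc]
    _ ≤ (n : ℝ)⁻¹ ^ 2 * n * ∫ ω, M ^ 2 * ⟪V ω, u⟫ ^ 2 ∂P := by
        refine mul_le_mul_of_nonneg_left ?_ (by positivity)
        exact integral_mono_ae (hA₀.integrable_norm_pow two_ne_zero)
          ((hV.inner_const u).integrable_sq.const_mul _) hA₀le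
    _ = M ^ 2 * (n : ℝ)⁻¹ * ∫ ω, ⟪V ω, u⟫ ^ 2 ∂P := by
        rw [integral_const_mul]
        obtain rfl | hn := eq_or_ne n 0
        · simp
        · field_simp

lemma lintegral_hsNormSq_empiricalCrossCov_comp_le [CompleteSpace G1] [CompleteSpace GZ]
    [IsFiniteMeasure P] (hiid : iIndepFun (fun i ω => (Ws i ω, Vs i ω)) P)
    (hident : ∀ i, IdentDistrib (fun ω => (Ws i ω, Vs i ω)) (fun ω => (W ω, V ω)) P P)
    (hV : MemLp V 2 P) {M : ℝ} (hW : ∀ᵐ ω ∂P, ‖W ω‖ ≤ M)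
    (hzero : ∫ ω, rankOne (W ω) (V ω) ∂P = 0) (b : HilbertBasis ℕ ℝ GZ) (S : GZ →L[ℝ] GZ)
    (n : ℕ) :
    ∫⁻ ω, ENNReal.ofReal (hsNormSq b ((empiricalCrossCov Ws Vs n ω).comp S)) ∂P
      ≤ ENNReal.ofReal (M ^ 2 * (n : ℝ)⁻¹) * ∑' k, ENNReal.ofReal (∫ ω, ⟪V ω, S (b k)⟫ ^ 2 ∂P) :=
  calc ∫⁻ ω, ENNReal.ofReal (hsNormSq b ((empiricalCrossCov Ws Vs n ω).comp S)) ∂P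
      ≤ ∫⁻ ω, ∑' k, ENNReal.ofReal (‖empiricalCrossCov Ws Vs n ω (S (b k))‖ ^ 2) ∂P :=
        lintegral_mono fun ω => ENNReal.ofReal_tsum_le fun k => sq_nonneg _
    _ = ∑' k, ∫⁻ ω, ENNReal.ofReal (‖empiricalCrossCov Ws Vs n ω (S (b k))‖ ^ 2) ∂P :=
        lintegral_tsum fun k =>
          ((aemeasurable_empiricalCrossCov_apply hident n _).norm.pow_const 2).ennreal_ofReal
    _ ≤ ∑' k, ENNReal.ofReal (M ^ 2 * (n : ℝ)⁻¹ * ∫ ω, ⟪V ω, S (b k)⟫ ^ 2 ∂P) :=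
        ENNReal.tsum_le_tsum fun k =>
          lintegral_norm_sq_empiricalCrossCov_apply_le hiid hident hV hW hzero n (S (b k))
    _ = _ := by
        rw [← ENNReal.tsum_mul_left]
        exact tsum_congr fun k => ENNReal.ofReal_mul (by positivity)

end Empirical

theorem statement16_general
    (P : Measure Ω) [IsProbabilityMeasure P]
    {G1 HZ GZ : Type*}
    [NormedAddCommGroup G1] [InnerProductSpace ℝ G1] [CompleteSpace G1]
    [SecondCountableTopology G1] [MeasurableSpace G1] [BorelSpace G1]
    [MeasurableSpace HZ]
    [NormedAddCommGroup GZ] [InnerProductSpace ℝ GZ] [CompleteSpace GZ]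
    [SecondCountableTopology GZ] [MeasurableSpace GZ] [BorelSpace GZ]
    (b : HilbertBasis ℕ ℝ GZ)
    -- the pair (W, V) with V = κ̃_Z(·,Z)
    (W : Ω → G1) (Z : Ω → HZ) (hZ : Measurable Z)
    (kZ : HZ → GZ) (hkZ : Measurable kZ)
    (hmZ : Integrable (fun ω => ⟪kZ (Z ω), kZ (Z ω)⟫) P)
    -- ‖W‖ ≤ M almost surely
    (M : ℝ) (hWbd : ∀ᵐ ω ∂P, ‖W ω‖ ≤ M)
    -- E[W ⊗ V] = 0 (e.g. E[W | Z] = 0)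
    (hzero : (∫ ω, rankOne (W ω) (ctrKer P kZ Z (Z ω)) ∂P) = 0)
    -- spectral decomposition of Σ_ZZ with eigenvalues γ₁ ≥ γ₂ ≥ … ≥ 0
    (γ : ℕ → ℝ) (φ : ℕ → GZ) (hφ : Orthonormal ℝ φ)
    (hspec : ∀ f : GZ, covOp P kZ Z f = ∑' k, (γ k * ⟪φ k, f⟫) • φ k)
    -- i.i.d. copies (Wᵢ, Vᵢ) of (W, V)
    (Ws : ℕ → Ω → G1) (Zs : ℕ → Ω → HZ)
    (hiid : iIndepFun (fun i ω => (Ws i ω, Zs i ω)) P)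
    (hident : ∀ i, IdentDistrib (fun ω => (Ws i ω, Zs i ω)) (fun ω => (W ω, Z ω)) P P) :
    ∀ ε : ℝ, 0 < ε → ∀ n : ℕ, 0 < n →
      (∫⁻ ω, ENNReal.ofReal (hsNormSq b
          ((((n : ℝ)⁻¹ • ∑ i ∈ Finset.range n,
              rankOne (Ws i ω) (ctrKer P kZ Z (Zs i ω))) :
            GZ →L[ℝ] G1).comp (Ring.inverse (covOp P kZ Z + ε • 1)))) ∂P)
        ≤ ENNReal.ofReal (M ^ 2 * (n : ℝ)⁻¹ * ∑' k, γ k / (γ k + ε) ^ 2) := by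
  intro ε hε n _
  have hV : MemLp (fun ω => ctrKer P kZ Z (Z ω)) 2 P := memLp_ctrKer hkZ hZ hmZ
  have hctr : Measurable fun p : G1 × HZ => (p.1, ctrKer P kZ Z p.2) :=
    measurable_fst.prodMk ((hkZ.comp measurable_snd).sub_const _)
  have hiid' : iIndepFun (fun i ω => (Ws i ω, ctrKer P kZ Z (Zs i ω))) P :=
    hiid.comp (fun _ => _) fun _ => hctr
  have hident' : ∀ i, IdentDistrib (fun ω => (Ws i ω, ctrKer P kZ Z (Zs i ω)))
      (fun ω => (W ω, ctrKer P kZ Z (Z ω))) P P := fun i => (hident i).comp hctr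
  by_cases hT : IsUnit (covOp P kZ Z + ε • 1)
  swap
  · simp [Ring.inverse_non_unit _ hT, hsNormSq]
  calc _ ≤ ENNReal.ofReal (M ^ 2 * (n : ℝ)⁻¹) * ∑' k, ENNReal.ofReal
          ⟪Ring.inverse (covOp P kZ Z + ε • 1) (b k),
            covOp P kZ Z (Ring.inverse (covOp P kZ Z + ε • 1) (b k))⟫ := by
        simp_rw [inner_covOp_apply_self hV]
        exact lintegral_hsNormSq_empiricalCrossCov_comp_le hiid' hident' hV hWbd hzero b _ n
    _ = ENNReal.ofReal (M ^ 2 * (n : ℝ)⁻¹) * ENNReal.ofReal (∑' j, γ j / (γ j + ε) ^ 2) := by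
        rw [tsum_ofReal_inner_resolvent_of_eq_tsum b hφ hspec (isSelfAdjoint_covOp hV)
          (nonneg_of_covOp_eq_tsum hV hφ hspec) (summable_of_covOp_eq_tsum hV hφ hspec) hε hT]
    _ = _ := (ENNReal.ofReal_mul (by positivity)).symm

theorem statement16
    (P : Measure Ω) [IsProbabilityMeasure P]
    {G1 HZ GZ : Type*}
    [NormedAddCommGroup G1] [InnerProductSpace ℝ G1] [CompleteSpace G1]
    [SecondCountableTopology G1] [MeasurableSpace G1] [BorelSpace G1]
    [NormedAddCommGroup HZ] [InnerProductSpace ℝ HZ] [CompleteSpace HZ]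
    [SecondCountableTopology HZ] [MeasurableSpace HZ] [BorelSpace HZ]
    [NormedAddCommGroup GZ] [InnerProductSpace ℝ GZ] [CompleteSpace GZ]
    [SecondCountableTopology GZ] [MeasurableSpace GZ] [BorelSpace GZ]
    (b : HilbertBasis ℕ ℝ GZ)
    -- the pair (W, V) with V = κ̃_Z(·,Z)
    (W : Ω → G1) (Z : Ω → HZ) (hW : Measurable W) (hZ : Measurable Z)
    (kZ : HZ → GZ) (hkZ : Measurable kZ)
    (hdZ : (Submodule.span ℝ (Set.range kZ)).topologicalClosure = ⊤)
    (hmZ : Integrable (fun ω => ⟪kZ (Z ω), kZ (Z ω)⟫) P)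
    -- ‖W‖ ≤ M almost surely
    (M : ℝ) (hM : 0 ≤ M) (hWbd : ∀ᵐ ω ∂P, ‖W ω‖ ≤ M)
    -- E[W ⊗ V] = 0 (e.g. E[W | Z] = 0)
    (hzero : (∫ ω, rankOne (W ω) (ctrKer P kZ Z (Z ω)) ∂P) = 0)
    -- spectral decomposition of Σ_ZZ with eigenvalues γ₁ ≥ γ₂ ≥ … ≥ 0
    (γ : ℕ → ℝ) (φ : ℕ → GZ) (hφ : Orthonormal ℝ φ)
    (hγpos : ∀ k, 0 ≤ γ k) (hγmono : Antitone γ)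
    (hspec : ∀ f : GZ, covOp P kZ Z f = ∑' k, (γ k * ⟪φ k, f⟫) • φ k)
    -- i.i.d. copies (Wᵢ, Vᵢ) of (W, V)
    (Ws : ℕ → Ω → G1) (Zs : ℕ → Ω → HZ)
    (hmeas : ∀ i, Measurable (Ws i) ∧ Measurable (Zs i))
    (hiid : iIndepFun (fun i ω => (Ws i ω, Zs i ω)) P)
    (hident : ∀ i, IdentDistrib (fun ω => (Ws i ω, Zs i ω)) (fun ω => (W ω, Z ω)) P P) :
    ∀ ε : ℝ, 0 < ε → ∀ n : ℕ, 0 < n →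
      (∫⁻ ω, ENNReal.ofReal (hsNormSq b
          ((((n : ℝ)⁻¹ • ∑ i ∈ Finset.range n,
              rankOne (Ws i ω) (ctrKer P kZ Z (Zs i ω))) :
            GZ →L[ℝ] G1).comp (Ring.inverse (covOp P kZ Z + ε • 1)))) ∂P)
        ≤ ENNReal.ofReal (M ^ 2 * (n : ℝ)⁻¹ * ∑' k, γ k / (γ k + ε) ^ 2) :=
  statement16_general P b W Z hZ kZ hkZ hmZ M hWbd hzero γ φ hφ hspec Ws Zs hiid hident
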